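/- arXiv:1106.0484 — 2 statements merged into one kernel-verified Lean document; each statement's English description precedes it below -/
import Mathlib

section
/- Let $x_1(t)$ solve $x_1' = -x_1 - x_1^2 + x_1^3$, $x_1(0)=1$, and suppose $s : [0, t_c) \to \mathbb{R}$ satisfies $s'(t) = x_1(t)^2 + (1 - x_1(t)^2)s(t)^2$ with $s(0) = 1$ and $s(t) \to \infty$ as $t \to t_c^-$. Then $\lim_{\epsilon \to 0^+} \epsilon \, s(t_c - \epsilon) = \frac{1}{1 - x_1(t_c)^2}$. -/
/-!
Along the Riccati equation `s' = x₁² + (1 - x₁²) s²`, the reciprocal `u = 1/s` satisfies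
`u' = -x₁² u² - (1 - x₁²)`. Since `s` blows up, `u → 0` and `u' → -(1 - x₁(t_c)²)` as `t → t_c⁻`,
so by L'Hôpital's rule `u(t_c - ε) / ε → 1 - x₁(t_c)²`; inverting gives the blow-up rate of `s`.
-/

open Filter Set Topology

theorem tendsto_comp_sub_div_of_hasDerivAt_nhdsLT {f f' : ℝ → ℝ} {c L : ℝ}
    (hf : ∀ᶠ t in 𝓝[<] c, HasDerivAt f (f' t) t) (hf0 : Tendsto f (𝓝[<] c) (𝓝 0))
    (hf' : Tendsto f' (𝓝[<] c) (𝓝 (-L))) :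
    Tendsto (fun ε => f (c - ε) / ε) (𝓝[>] 0) (𝓝 L) := by
  have hdist : ∀ t : ℝ, HasDerivAt (fun t => c - t) (-1) t := fun t =>
    by simpa using (hasDerivAt_id t).const_sub c
  have hratio : Tendsto (fun t => f t / (c - t)) (𝓝[<] c) (𝓝 L) := by
    refine HasDerivAt.lhopital_zero_nhdsLT hf (.of_forall hdist) (.of_forall fun _ => by norm_num)
      hf0 ?_ (by simpa [div_neg] using hf'.neg)
    simpa using ((continuous_sub_left c).tendsto' c 0 (sub_self c)).mono_left nhdsWithin_le_nhds
  have hreflect : Tendsto (fun ε => c - ε) (𝓝[>] 0) (𝓝[<] c) := by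
    refine tendsto_nhdsWithin_of_tendsto_nhds_of_eventually_within _ ?_ ?_
    · exact ((continuous_sub_left c).tendsto' 0 c (sub_zero c)).mono_left nhdsWithin_le_nhds
    · filter_upwards [self_mem_nhdsWithin] with ε (hε : 0 < ε)
      exact sub_lt_self c hε
  simpa only [Function.comp_def, sub_sub_cancel] using hratio.comp hreflect

theorem tendsto_mul_comp_sub_of_inv_hasDerivAt {s u' : ℝ → ℝ} {c L : ℝ} (hL : L ≠ 0)
    (hs : Tendsto s (𝓝[<] c) atTop)
    (hu : ∀ᶠ t in 𝓝[<] c, HasDerivAt (fun t => (s t)⁻¹) (u' t) t)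
    (hu' : Tendsto u' (𝓝[<] c) (𝓝 (-L))) :
    Tendsto (fun ε => ε * s (c - ε)) (𝓝[>] 0) (𝓝 L⁻¹) := by
  have h := (tendsto_comp_sub_div_of_hasDerivAt_nhdsLT hu hs.inv_tendsto_atTop hu').inv₀ hL
  simpa only [inv_div, div_inv_eq_mul] using h

theorem HasDerivAt.inv_of_riccati {s : ℝ → ℝ} {a b t : ℝ}
    (h : HasDerivAt s (a + b * s t ^ 2) t) (hs : s t ≠ 0) :
    HasDerivAt (fun t => (s t)⁻¹) (-(a * (s t)⁻¹ ^ 2) - b) t := by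
  refine (h.fun_inv hs).congr_deriv ?_
  field_simp
  ring

theorem stmt4_general (x1 s : ℝ → ℝ) (tc : ℝ) (htc : 0 < tc)
    (hx1 : ∀ t : ℝ, HasDerivAt x1 (-x1 t - (x1 t) ^ 2 + (x1 t) ^ 3) t)
    (hx1pos : 0 < x1 tc) (hx1lt : x1 tc < 1)
    (hs : ∀ t ∈ Set.Ico (0 : ℝ) tc,
      HasDerivAt s ((x1 t) ^ 2 + (1 - (x1 t) ^ 2) * (s t) ^ 2) t)
    (hblow : Tendsto s (nhdsWithin tc (Set.Iio tc)) atTop) :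
    Tendsto (fun ε : ℝ => ε * s (tc - ε)) (nhdsWithin 0 (Set.Ioi 0))
      (nhds (1 / (1 - (x1 tc) ^ 2))) := by
  have hL : 1 - x1 tc ^ 2 ≠ 0 := by nlinarith
  have hx1c : Tendsto x1 (𝓝[<] tc) (𝓝 (x1 tc)) := (hx1 tc).continuousAt.continuousWithinAt
  have hinv : ∀ᶠ t in 𝓝[<] tc, HasDerivAt (fun t => (s t)⁻¹)
      (-(x1 t ^ 2 * (s t)⁻¹ ^ 2) - (1 - x1 t ^ 2)) t := by
    filter_upwards [Ioo_mem_nhdsLT htc, hblow.eventually_gt_atTop 0] with t ht hst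
    exact (hs t (Ioo_subset_Ico_self ht)).inv_of_riccati hst.ne'
  have hinv' : Tendsto (fun t => -(x1 t ^ 2 * (s t)⁻¹ ^ 2) - (1 - x1 t ^ 2)) (𝓝[<] tc)
      (𝓝 (-(1 - x1 tc ^ 2))) := by
    have h := ((hx1c.pow 2).mul (hblow.inv_tendsto_atTop.pow 2)).neg.sub
      ((tendsto_const_nhds (x := (1 : ℝ))).sub (hx1c.pow 2))
    rwa [zero_pow two_ne_zero, mul_zero, neg_zero, zero_sub] at h
  simpa only [one_div] using tendsto_mul_comp_sub_of_inv_hasDerivAt hL hblow hinv hinv'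

/-- Blow-up rate of the Bohman–Frieze susceptibility:
`ε · s(t_c − ε) → 1/(1 − x₁(t_c)²)` as `ε → 0⁺`. -/
theorem stmt4 (x1 s : ℝ → ℝ) (tc : ℝ) (htc : 0 < tc)
    (hx1 : ∀ t : ℝ, HasDerivAt x1 (-x1 t - (x1 t) ^ 2 + (x1 t) ^ 3) t)
    (hx10 : x1 0 = 1)
    (hx1pos : 0 < x1 tc) (hx1lt : x1 tc < 1)
    (hs : ∀ t ∈ Set.Ico (0 : ℝ) tc,
      HasDerivAt s ((x1 t) ^ 2 + (1 - (x1 t) ^ 2) * (s t) ^ 2) t)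
    (hs0 : s 0 = 1)
    (hblow : Tendsto s (nhdsWithin tc (Set.Iio tc)) atTop) :
    Tendsto (fun ε : ℝ => ε * s (tc - ε)) (nhdsWithin 0 (Set.Ioi 0))
      (nhds (1 / (1 - (x1 tc) ^ 2))) :=
  stmt4_general x1 s tc htc hx1 hx1pos hx1lt hs hblow
end

section
/- With $s(t)$ and $x_1(t)$ as above (susceptibility blowing up at $t_c$), the quantity $\mu_\epsilon = \frac{1}{2}\int_0^{t_c - \epsilon} (1 - x_1(t)^2)\, s(t)\, dt$ satisfies $\mu_\epsilon \sim \frac{1}{2}\log\frac{1}{\epsilon}$ as $\epsilon \to 0^+$, i.e. $\mu_\epsilon / \log(1/\epsilon) \to 1/2$. -/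
/-! Along the Riccati equation `s' = x₁² + (1 - x₁²) s²` one has
`(log s)' = x₁² / s + (1 - x₁²) s`, so `2 μ_ε = log s(t_c - ε) - ∫₀^{t_c - ε} x₁² / s`. The
correction integral stays bounded because `s ≥ 1` (wherever `s = 1` the equation forces `s' = 1`).
For the main term, `(1 / s)' = -(x₁² / s² + 1 - x₁²) → -(1 - x₁(t_c)²)`, so by L'Hôpital
`1 / s(t_c - ε) ∼ (1 - x₁(t_c)²) ε`, i.e. `log s(t_c - ε) = log (1 / ε) + O(1)`. -/

open Filter Set Real Topology Asymptotics

theorem le_of_hasDerivAt_pos_of_eq {f f' : ℝ → ℝ} {a b c : ℝ}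
    (hf : ∀ t ∈ Ico a b, HasDerivAt f (f' t) t) (ha : c ≤ f a)
    (hpos : ∀ t ∈ Ico a b, f t = c → 0 < f' t) : ∀ t ∈ Ico a b, c ≤ f t := by
  intro t ht
  have hsub : Icc a t ⊆ Ico a b := fun u hu => ⟨hu.1, hu.2.trans_lt ht.2⟩
  have := image_le_of_deriv_right_lt_deriv_boundary (f := fun u => -f u) (f' := fun u => -f' u)
    (fun u hu => (hf u (hsub hu)).continuousAt.neg.continuousWithinAt)
    (fun u hu => (hf u (hsub (Ico_subset_Icc_self hu))).neg.hasDerivWithinAt)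
    (B := fun _ => -c) (B' := fun _ => 0) (neg_le_neg ha) (fun _ => hasDerivAt_const _ (-c))
    (fun u hu h => neg_neg_of_pos (hpos u (hsub (Ico_subset_Icc_self hu)) (neg_inj.1 h)))
    ⟨ht.1, le_rfl⟩
  simpa using this

theorem integral_mul_eq_log_sub_integral_div {p q s : ℝ → ℝ} {a b : ℝ} (hab : a ≤ b)
    (hp : ContinuousOn p (Icc a b)) (hq : ContinuousOn q (Icc a b))
    (hs : ∀ t ∈ Icc a b, HasDerivAt s (p t + q t * s t ^ 2) t)
    (hpos : ∀ t ∈ Icc a b, 0 < s t) :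
    ∫ t in a..b, q t * s t = log (s b) - log (s a) - ∫ t in a..b, p t / s t := by
  have hsc : ContinuousOn s (Icc a b) := fun t ht => (hs t ht).continuousAt.continuousWithinAt
  have hint₁ : IntervalIntegrable (fun t => p t / s t) MeasureTheory.volume a b :=
    (hp.div hsc fun t ht => (hpos t ht).ne').intervalIntegrable_of_Icc hab
  have hint₂ : IntervalIntegrable (fun t => q t * s t) MeasureTheory.volume a b :=
    (hq.mul hsc).intervalIntegrable_of_Icc hab
  have hderiv : ∀ t ∈ uIcc a b, HasDerivAt (fun t => log (s t)) (p t / s t + q t * s t) t := by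
    intro t ht
    rw [uIcc_of_le hab] at ht
    convert (hs t ht).log (hpos t ht).ne' using 1
    field_simp
  have := intervalIntegral.integral_eq_sub_of_hasDerivAt hderiv (hint₁.add hint₂)
  rw [intervalIntegral.integral_add hint₁ hint₂] at this
  linarith

theorem tendsto_inv_div_sub_of_riccati {p q s : ℝ → ℝ} {b p₀ c : ℝ}
    (hs : ∀ᶠ t in 𝓝[<] b, HasDerivAt s (p t + q t * s t ^ 2) t)
    (hp : Tendsto p (𝓝[<] b) (𝓝 p₀)) (hq : Tendsto q (𝓝[<] b) (𝓝 c))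
    (hblow : Tendsto s (𝓝[<] b) atTop) :
    Tendsto (fun t => (s t)⁻¹ / (b - t)) (𝓝[<] b) (𝓝 c) := by
  have hinv : Tendsto (fun t => (s t)⁻¹) (𝓝[<] b) (𝓝 0) := tendsto_inv_atTop_zero.comp hblow
  have hgap : Tendsto (fun t => b - t) (𝓝[<] b) (𝓝 0) := by
    have : Tendsto (fun t => b - t) (𝓝 b) (𝓝 (b - b)) := tendsto_const_nhds.sub tendsto_id
    simpa using this.mono_left nhdsWithin_le_nhds
  refine HasDerivAt.lhopital_zero_nhdsLT (f' := fun t => -(p t * (s t)⁻¹ ^ 2 + q t))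
    (g' := fun _ => -1) ?_ ?_ (Eventually.of_forall fun _ => by norm_num) hinv hgap ?_
  · filter_upwards [hs, hblow.eventually_gt_atTop 0] with t ht hpos
    refine (ht.inv hpos.ne').congr_deriv ?_
    field_simp
  · exact Eventually.of_forall fun t => by simpa using (hasDerivAt_id t).const_sub b
  · have := (hp.mul (hinv.pow 2)).add hq
    rw [zero_pow two_ne_zero, mul_zero, zero_add] at this
    exact this.congr fun t => by ring

theorem tendsto_log_sub_log_one_div_of_tendsto_inv_div_sub {s : ℝ → ℝ} {b c : ℝ} (hc : 0 < c)
    (h : Tendsto (fun t => (s t)⁻¹ / (b - t)) (𝓝[<] b) (𝓝 c)) :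
    Tendsto (fun ε => log (s (b - ε)) - log (1 / ε)) (𝓝[>] 0) (𝓝 (-log c)) := by
  have hshift : Tendsto (fun ε => b - ε) (𝓝[>] 0) (𝓝[<] b) := by
    refine tendsto_nhdsWithin_iff.2 ⟨?_, eventually_mem_nhdsWithin.mono fun ε hε => ?_⟩
    · have : Tendsto (fun ε => b - ε) (𝓝 0) (𝓝 (b - 0)) := tendsto_const_nhds.sub tendsto_id
      simpa using this.mono_left nhdsWithin_le_nhds
    · simpa using hε
  have hε := h.comp hshift
  refine (((continuousAt_log hc.ne').tendsto.comp hε).neg).congr' ?_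
  filter_upwards [hε.eventually (lt_mem_nhds hc), self_mem_nhdsWithin] with ε hpos (hε : 0 < ε)
  simp only [Function.comp_apply, sub_sub_cancel] at hpos ⊢
  have : s (b - ε) ≠ 0 := fun h0 => by simp [h0] at hpos
  rw [log_div (inv_ne_zero this) hε.ne', log_inv, one_div, log_inv]
  ring

theorem norm_integral_div_le_of_one_le {p s : ℝ → ℝ} {a b C : ℝ} (hab : a ≤ b)
    (hp : ∀ t ∈ Ioc a b, ‖p t‖ ≤ C) (hs : ∀ t ∈ Ioc a b, 1 ≤ s t) :
    ‖∫ t in a..b, p t / s t‖ ≤ C * (b - a) := by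
  have hbound : ∀ t ∈ uIoc a b, ‖p t / s t‖ ≤ C := by
    intro t ht
    rw [uIoc_of_le hab] at ht
    rw [norm_div]
    exact (div_le_self (norm_nonneg _) ((hs t ht).trans (le_abs_self _))).trans (hp t ht)
  simpa [abs_of_nonneg (sub_nonneg.2 hab)] using
    intervalIntegral.norm_integral_le_of_norm_le_const hbound

theorem isEquivalent_of_sub_isBigO_one {α : Type*} {l : Filter α} {f g : α → ℝ}
    (h : (f - g) =O[l] fun _ => (1 : ℝ)) (hg : Tendsto g l atTop) : f ~[l] g :=
  h.trans_isLittleO ((isLittleO_one_left_iff ℝ).2 (tendsto_norm_atTop_atTop.comp hg))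

theorem tendsto_integral_mul_div_log_of_riccati {p q s : ℝ → ℝ} {a b : ℝ} (hab : a < b)
    (hp : ContinuousOn p (Icc a b)) (hq : ContinuousOn q (Icc a b)) (hqb : 0 < q b)
    (hs : ∀ t ∈ Ico a b, HasDerivAt s (p t + q t * s t ^ 2) t) (hs1 : ∀ t ∈ Ico a b, 1 ≤ s t)
    (hblow : Tendsto s (𝓝[<] b) atTop) :
    Tendsto (fun ε => (∫ t in a..(b - ε), q t * s t) / log (1 / ε)) (𝓝[>] 0) (𝓝 1) := by
  have hleft : 𝓝[<] b ≤ 𝓝[Icc a b] b := nhdsWithin_le_of_mem (Icc_mem_nhdsLT hab)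
  have hrate : Tendsto (fun ε => log (s (b - ε)) - log (1 / ε)) (𝓝[>] 0) (𝓝 (-log (q b))) :=
    tendsto_log_sub_log_one_div_of_tendsto_inv_div_sub hqb <| tendsto_inv_div_sub_of_riccati
      (eventually_of_mem (Ioo_mem_nhdsLT hab) fun t ht => hs t (Ioo_subset_Ico_self ht))
      ((hp b ⟨hab.le, le_rfl⟩).tendsto.mono_left hleft)
      ((hq b ⟨hab.le, le_rfl⟩).tendsto.mono_left hleft) hblow
  obtain ⟨C, hC⟩ := isCompact_Icc.exists_bound_of_continuousOn hp
  have hC0 : 0 ≤ C := (norm_nonneg _).trans (hC a ⟨le_rfl, hab.le⟩)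
  have hmem : ∀ᶠ ε in 𝓝[>] (0 : ℝ), b - ε ∈ Ico a b :=
    eventually_of_mem (Ioc_mem_nhdsGT (sub_pos.2 hab)) fun ε hε =>
      ⟨by linarith [hε.2], by linarith [hε.1]⟩
  have hcorr : (fun ε => ∫ t in a..(b - ε), p t / s t) =O[𝓝[>] 0] fun _ => (1 : ℝ) := by
    refine IsBigO.of_bound (C * (b - a)) (hmem.mono fun ε hε => ?_)
    have := norm_integral_div_le_of_one_le hε.1 (fun t ht => hC t ⟨ht.1.le, ht.2.trans hε.2.le⟩)
      (fun t ht => hs1 t ⟨ht.1.le, ht.2.trans_lt hε.2⟩)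
    simpa using this.trans (mul_le_mul_of_nonneg_left (by linarith [hε.2]) hC0)
  have hlog : Tendsto (fun ε => log (1 / ε)) (𝓝[>] 0) atTop := by
    refine (tendsto_neg_atBot_atTop.comp tendsto_log_nhdsGT_zero).congr fun ε => ?_
    simp [log_inv]
  refine (isEquivalent_iff_tendsto_one (hlog.eventually_ne_atTop 0)).1 <|
    isEquivalent_of_sub_isBigO_one ((((hrate.isBigO_one ℝ).sub hcorr).sub
      (isBigO_const_one ℝ (log (s a)) _)).congr' ?_ .rfl) hlog
  filter_upwards [hmem] with ε hε
  have hsub : Icc a (b - ε) ⊆ Ico a b := fun t ht => ⟨ht.1, ht.2.trans_lt hε.2⟩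
  have hsub' : Icc a (b - ε) ⊆ Icc a b := hsub.trans Ico_subset_Icc_self
  rw [Pi.sub_apply, integral_mul_eq_log_sub_integral_div hε.1 (hp.mono hsub') (hq.mono hsub')
    (fun t ht => hs t (hsub ht)) (fun t ht => one_pos.trans_le (hs1 t (hsub ht)))]
  ring

theorem stmt5_general (x1 s : ℝ → ℝ) (tc : ℝ) (htc : 0 < tc)
    (hx1 : ∀ t : ℝ, HasDerivAt x1 (-x1 t - (x1 t) ^ 2 + (x1 t) ^ 3) t)
    (hx1pos : 0 < x1 tc) (hx1lt : x1 tc < 1)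
    (hs : ∀ t ∈ Set.Ico (0 : ℝ) tc,
      HasDerivAt s ((x1 t) ^ 2 + (1 - (x1 t) ^ 2) * (s t) ^ 2) t)
    (hs0 : s 0 = 1)
    (hblow : Tendsto s (nhdsWithin tc (Set.Iio tc)) atTop) :
    Tendsto
      (fun ε : ℝ =>
        ((1 / 2) * ∫ t in (0 : ℝ)..(tc - ε), (1 - (x1 t) ^ 2) * s t) / Real.log (1 / ε))
      (nhdsWithin 0 (Set.Ioi 0)) (nhds (1 / 2)) := by
  have hx1c : Continuous x1 := continuous_iff_continuousAt.2 fun t => (hx1 t).continuousAt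
  have hs1 : ∀ t ∈ Ico 0 tc, 1 ≤ s t :=
    le_of_hasDerivAt_pos_of_eq hs hs0.ge fun t _ ht => by rw [ht]; norm_num
  have hratio := tendsto_integral_mul_div_log_of_riccati (p := fun t => x1 t ^ 2)
    (q := fun t => 1 - x1 t ^ 2) htc (hx1c.pow 2).continuousOn
    (continuous_const.sub (hx1c.pow 2)).continuousOn (by nlinarith) hs hs1 hblow
  have := hratio.const_mul (1 / 2)
  rw [mul_one] at this
  exact this.congr fun ε => mul_div_assoc _ _ _ |>.symm

/-- The limiting expected number of unicyclic components:
`μ_ε = ½∫₀^{t_c−ε} (1−x₁²)s ∼ ½ log(1/ε)` as `ε → 0⁺`. -/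
theorem stmt5 (x1 s : ℝ → ℝ) (tc : ℝ) (htc : 0 < tc)
    (hx1 : ∀ t : ℝ, HasDerivAt x1 (-x1 t - (x1 t) ^ 2 + (x1 t) ^ 3) t)
    (hx10 : x1 0 = 1)
    (hx1pos : 0 < x1 tc) (hx1lt : x1 tc < 1)
    (hs : ∀ t ∈ Set.Ico (0 : ℝ) tc,
      HasDerivAt s ((x1 t) ^ 2 + (1 - (x1 t) ^ 2) * (s t) ^ 2) t)
    (hs0 : s 0 = 1)
    (hblow : Tendsto s (nhdsWithin tc (Set.Iio tc)) atTop) :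
    Tendsto
      (fun ε : ℝ =>
        ((1 / 2) * ∫ t in (0 : ℝ)..(tc - ε), (1 - (x1 t) ^ 2) * s t) / Real.log (1 / ε))
      (nhdsWithin 0 (Set.Ioi 0)) (nhds (1 / 2)) :=
  stmt5_general x1 s tc htc hx1 hx1pos hx1lt hs hs0 hblow
end
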